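/- arXiv:math/0605229 — 2 statements merged into one kernel-verified Lean document; each statement's English description precedes it below -/
import Mathlib

section
/- In a triangulated category D, given a bounded complex A_m → A_{m-1} → ⋯ → A_0 (compositions of consecutive maps are zero) satisfying Hom(A_a, A_b[r]) = 0 for all a > b and r < 0, a right convolution of the complex exists and is unique up to (non-canonical) isomorphism. -/
/-!
Everything rests on one vanishing statement about a Postnikov system
`C_{k+1} → A_k → C_k → C_{k+1}[1]`, `C_m ≅ A_m`: if `Hom(A_p, X[r]) = 0` for `r < 0` and all
`p ≥ k`, then `Hom(C_k, X[r]) = 0` for `r < 0`, by descending induction on `k` (a map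
`C_k → X[r]` killing `A_k` factors through `C_{k+1}[1]`). Hence a map `C_{k+1} → A_k` is
determined by its restriction to `A_{k+1}`.

Existence, by induction on `m`: take a system for `A_m → ⋯ → A_1`; then `d_0` lifts along
`A_1 → C_1` because `C_2 → A_1 → A_0` vanishes on `A_2`, and `C_0` is a cone of the lift.
Uniqueness, by descending induction: an isomorphism `C_{k+1} ≅ C'_{k+1}` under `A_{k+1}`
intertwines `C_{k+1} → A_k` with `C'_{k+1} → A_k` by the determinacy above, so it extends to
an isomorphism of the triangles through `A_k`.
-/

open CategoryTheory CategoryTheory.Limits CategoryTheory.Pretriangulated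

universe v u

/-- A bounded complex `A_m → A_{m-1} → ⋯ → A_0` in a category, encoded by
`obj j = A_j` for `j ≤ m` (values beyond `m` are irrelevant), with differentials
`d j : A_{j+1} ⟶ A_j` whose consecutive composites vanish. -/
structure BddComplex (D : Type u) [Category.{v} D] [Preadditive D] (m : ℕ) where
  obj : ℕ → D
  d : ∀ j : ℕ, obj (j + 1) ⟶ obj j
  comp_zero : ∀ j : ℕ, j + 2 ≤ m → d (j + 1) ≫ d j = 0

variable {D : Type u} [Category.{v} D] [Preadditive D] [HasZeroObject D]
  [HasShift D ℤ] [∀ n : ℤ, (CategoryTheory.shiftFunctor D n).Additive] [Pretriangulated D]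

/-- `d0 : A_0 ⟶ A` is a right convolution of the bounded complex `Z` if there is a
Postnikov system of distinguished triangles `C_{j+1} → A_j → C_j → C_{j+1}[1]`
(for `j < m`), with `C_m ≅ A_m` (via the map `a m`), `C_0 ≅ A`, compatible with
the differentials of `Z` and with `d0`. -/
def IsRightConvolution {m : ℕ} (Z : BddComplex D m) (A : D) (d0 : Z.obj 0 ⟶ A) : Prop :=
  ∃ (C : ℕ → D) (g : ∀ j : ℕ, C (j + 1) ⟶ Z.obj j) (a : ∀ j : ℕ, Z.obj j ⟶ C j)
    (δ : ∀ j : ℕ, C j ⟶ (C (j + 1))⟦(1 : ℤ)⟧) (e : C 0 ≅ A),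
      IsIso (a m) ∧
      (∀ j : ℕ, j < m → Triangle.mk (g j) (a j) (δ j) ∈ distTriang D) ∧
      (∀ j : ℕ, j + 1 ≤ m → a (j + 1) ≫ g j = Z.d j) ∧
      a 0 ≫ e.hom = d0

def NegShiftHomsVanish (Y X : D) : Prop :=
  ∀ r : ℤ, r < 0 → ∀ f : Y ⟶ X⟦r⟧, f = 0

lemma hom_shift_eq_zero {C A : Type*} [Category C] [HasZeroMorphisms C] [AddGroup A]
    [HasShift C A] {Y X : C} {n : A} (H : ∀ f : Y ⟶ X⟦-n⟧, f = 0) (h : Y⟦n⟧ ⟶ X) : h = 0 :=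
  ((shiftEquiv C n).toAdjunction.homEquiv _ _).injective ((H _).trans (H _).symm)

def BddComplex.tail {m : ℕ} (Z : BddComplex D (m + 1)) : BddComplex D m where
  obj j := Z.obj (j + 1)
  d j := Z.d (j + 1)
  comp_zero j hj := Z.comp_zero (j + 1) (by omega)

structure PostnikovSystem {m : ℕ} (Z : BddComplex D m) where
  C : ℕ → D
  g : ∀ j : ℕ, C (j + 1) ⟶ Z.obj j
  a : ∀ j : ℕ, Z.obj j ⟶ C j
  δ : ∀ j : ℕ, C j ⟶ (C (j + 1))⟦(1 : ℤ)⟧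
  isIso_a : IsIso (a m)
  distinguished : ∀ j : ℕ, j < m → Triangle.mk (g j) (a j) (δ j) ∈ distTriang D
  a_comp_g : ∀ j : ℕ, j + 1 ≤ m → a (j + 1) ≫ g j = Z.d j

lemma isRightConvolution_iff {m : ℕ} {Z : BddComplex D m} {A : D} {d0 : Z.obj 0 ⟶ A} :
    IsRightConvolution Z A d0 ↔ ∃ (P : PostnikovSystem Z) (e : P.C 0 ≅ A), P.a 0 ≫ e.hom = d0 :=
  ⟨fun ⟨C, g, a, δ, e, hiso, hT, hd, he⟩ => ⟨⟨C, g, a, δ, hiso, hT, hd⟩, e, he⟩,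
    fun ⟨⟨C, g, a, δ, hiso, hT, hd⟩, e, he⟩ => ⟨C, g, a, δ, e, hiso, hT, hd, he⟩⟩

namespace PostnikovSystem

variable {m : ℕ} {Z : BddComplex D m} (P : PostnikovSystem Z)

lemma eq_zero_of_a_comp_eq_zero_of_hom_shift {k : ℕ} (hk : k ≤ m) {Y : D} (f : P.C k ⟶ Y)
    (hf : P.a k ≫ f = 0) (hY : k < m → ∀ h : (P.C (k + 1))⟦(1 : ℤ)⟧ ⟶ Y, h = 0) : f = 0 := by
  rcases hk.lt_or_eq with hk | rfl
  · obtain ⟨h, rfl⟩ := Triangle.yoneda_exact₃ _ (P.distinguished k hk) f hf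
    obtain rfl := hY hk h
    exact comp_zero
  · have := P.isIso_a
    rwa [← cancel_epi (P.a k), comp_zero]

lemma exists_a_comp_eq {k : ℕ} (hk : k ≤ m) {X : D} (v : Z.obj k ⟶ X)
    (hv : k < m → P.g k ≫ v = 0) : ∃ w : P.C k ⟶ X, P.a k ≫ w = v := by
  rcases hk.lt_or_eq with hk | rfl
  · obtain ⟨w, hw⟩ := Triangle.yoneda_exact₂ _ (P.distinguished k hk) v (hv hk)
    exact ⟨w, hw.symm⟩
  · have := P.isIso_a
    exact ⟨inv (P.a k) ≫ v, by simp⟩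

theorem negShiftHomsVanish_C {X : D} {k₀ : ℕ}
    (hX : ∀ p, k₀ ≤ p → p ≤ m → NegShiftHomsVanish (Z.obj p) X)
    (k : ℕ) (hk₀ : k₀ ≤ k) (hk : k ≤ m) : NegShiftHomsVanish (P.C k) X := by
  intro r hr f
  refine P.eq_zero_of_a_comp_eq_zero_of_hom_shift hk f (hX k hk₀ hk r hr _) fun hkm h => ?_
  let e := (shiftFunctorAdd' D r (-1) (r - 1) (by omega)).app X
  refine hom_shift_eq_zero (fun f' => ?_) h
  rw [← cancel_mono e.inv, zero_comp]
  exact negShiftHomsVanish_C hX (k + 1) (by omega) hkm (r - 1) (by omega) _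
termination_by m - k

lemma eq_zero_of_a_comp_eq_zero {k : ℕ} (hk : k ≤ m) {X : D}
    (hX : ∀ p, k < p → p ≤ m → NegShiftHomsVanish (Z.obj p) X)
    (f : P.C k ⟶ X) (hf : P.a k ≫ f = 0) : f = 0 :=
  P.eq_zero_of_a_comp_eq_zero_of_hom_shift hk f hf fun hkm =>
    hom_shift_eq_zero (P.negShiftHomsVanish_C hX (k + 1) le_rfl hkm (-1) (by omega))

def cons {Z : BddComplex D (m + 1)} (P : PostnikovSystem Z.tail) {g₀ : P.C 0 ⟶ Z.obj 0}
    (hg₀ : P.a 0 ≫ g₀ = Z.d 0) {C₀ : D} {a₀ : Z.obj 0 ⟶ C₀} {δ₀ : C₀ ⟶ (P.C 0)⟦(1 : ℤ)⟧}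
    (hT : Triangle.mk g₀ a₀ δ₀ ∈ distTriang D) : PostnikovSystem Z where
  C := fun | 0 => C₀ | j + 1 => P.C j
  g := fun | 0 => g₀ | j + 1 => P.g j
  a := fun | 0 => a₀ | j + 1 => P.a j
  δ := fun | 0 => δ₀ | j + 1 => P.δ j
  isIso_a := P.isIso_a
  distinguished := fun
    | 0, _ => hT
    | j + 1, hj => P.distinguished j (by omega)
  a_comp_g := fun
    | 0, _ => hg₀
    | j + 1, hj => P.a_comp_g j (by omega)

lemma exists_a_zero_comp_eq_d_zero {Z : BddComplex D (m + 1)} (P : PostnikovSystem Z.tail)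
    (hvan : ∀ a b, a ≤ m + 1 → b < a → NegShiftHomsVanish (Z.obj a) (Z.obj b)) :
    ∃ g₀ : P.C 0 ⟶ Z.obj 0, P.a 0 ≫ g₀ = Z.d 0 := by
  refine P.exists_a_comp_eq (Nat.zero_le m) (Z.d 0) fun hm => ?_
  refine P.eq_zero_of_a_comp_eq_zero hm (fun p _ hp => hvan (p + 1) 0 (by omega) (by omega)) _ ?_
  -- not `rw [← Category.assoc]`: `Z.tail.obj 0` is `Z.obj 1` only up to unfolding
  refine (Category.assoc _ _ _).symm.trans ?_
  rw [P.a_comp_g 0 hm]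
  exact Z.comp_zero 0 (by omega)

theorem nonempty : ∀ {m : ℕ} (Z : BddComplex D m),
    (∀ a b, a ≤ m → b < a → NegShiftHomsVanish (Z.obj a) (Z.obj b)) →
    Nonempty (PostnikovSystem Z)
  | 0, Z, _ => ⟨⟨Z.obj, Z.d, fun _ => 𝟙 _, fun _ => 0, inferInstance,
      fun _ hj => absurd hj (Nat.not_lt_zero _), fun _ hj => by omega⟩⟩
  | m + 1, Z, hvan => by
    obtain ⟨P⟩ := nonempty Z.tail fun a b ha hb => hvan (a + 1) (b + 1) (by omega) (by omega)
    obtain ⟨g₀, hg₀⟩ := P.exists_a_zero_comp_eq_d_zero hvan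
    obtain ⟨C₀, a₀, δ₀, hT⟩ := distinguished_cocone_triangle g₀
    exact ⟨P.cons hg₀ hT⟩

theorem exists_iso (P' : PostnikovSystem Z)
    (hvan : ∀ a b, a ≤ m → b < a → NegShiftHomsVanish (Z.obj a) (Z.obj b))
    (k : ℕ) (hk : k ≤ m) : ∃ φ : P.C k ≅ P'.C k, P.a k ≫ φ.hom = P'.a k := by
  rcases hk.lt_or_eq with hk | rfl
  · obtain ⟨φ, hφ⟩ := exists_iso P' hvan (k + 1) hk
    have hg : P.g k ≫ 𝟙 _ = φ.hom ≫ P'.g k := by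
      rw [Category.comp_id, ← sub_eq_zero]
      refine P.eq_zero_of_a_comp_eq_zero hk (fun p hp hpm => hvan p k hpm (by omega)) _ ?_
      rw [Preadditive.comp_sub, P.a_comp_g k hk, ← Category.assoc, hφ, P'.a_comp_g k hk,
        sub_self]
    obtain ⟨e, -, he₂⟩ := exists_iso_of_arrow_iso _ _ (P.distinguished k hk)
      (P'.distinguished k hk) (Arrow.isoMk φ (Iso.refl (Z.obj k)) hg.symm)
    replace he₂ : e.hom.hom₂ = 𝟙 (Z.obj k) := he₂
    exact ⟨Triangle.π₃.mapIso e,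
      (e.hom.comm₂.trans (congrArg (· ≫ P'.a k) he₂)).trans (Category.id_comp _)⟩
  · have := P.isIso_a
    have := P'.isIso_a
    exact ⟨(asIso (P.a k)).symm ≪≫ asIso (P'.a k), by simp⟩
termination_by m - k

end PostnikovSystem

/-- **Existence and uniqueness of right convolutions** (Kawamata, Lemmas 2.1 and 2.4):
if `Hom(A_a, A_b[r]) = 0` for all `a > b` and `r < 0`, then the bounded complex
`A_m → ⋯ → A_0` has a right convolution, and it is unique up to isomorphism. -/
theorem rightConvolution_exists_and_unique {m : ℕ} (Z : BddComplex D m)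
    (hvan : ∀ (a b : ℕ), a ≤ m → b < a → ∀ (r : ℤ), r < 0 →
      ∀ (f : Z.obj a ⟶ (Z.obj b)⟦r⟧), f = 0) :
    (∃ (A : D) (d0 : Z.obj 0 ⟶ A), IsRightConvolution Z A d0) ∧
    (∀ (A A' : D) (d0 : Z.obj 0 ⟶ A) (d0' : Z.obj 0 ⟶ A'),
      IsRightConvolution Z A d0 → IsRightConvolution Z A' d0' → Nonempty (A ≅ A')) := by
  refine ⟨?_, fun A A' d0 d0' h h' => ?_⟩
  · obtain ⟨P⟩ := PostnikovSystem.nonempty Z hvan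
    exact ⟨P.C 0, P.a 0, isRightConvolution_iff.2 ⟨P, Iso.refl _, Category.comp_id _⟩⟩
  · obtain ⟨P, e, -⟩ := isRightConvolution_iff.1 h
    obtain ⟨P', e', -⟩ := isRightConvolution_iff.1 h'
    obtain ⟨φ, -⟩ := P.exists_iso P' hvan 0 (Nat.zero_le m)
    exact ⟨e.symm ≪≫ φ ≪≫ e'⟩
end

section
/- Let A be an abelian category with finite dimensional Hom spaces and let {P_i}_{i∈ℤ} be an ample sequence in A. Then every object A ∈ A admits a resolution ⋯ → A_i^{⊕k_i} → ⋯ → A_0^{⊕k_0} → A → 0 where each A_j belongs to {P_i} and k_j ∈ ℕ. -/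
/-!
Since `Hom(P_i, B)` is finite dimensional, a basis `f₁, …, f_k` of it assembles into a map
`P_i^{⊕ k} → B`, and for `i ≪ 0` this map is an epimorphism because the morphisms `P_i → B`
are jointly epimorphic. Applying this to `A`, then to the kernel of the resulting epimorphism,
and so on, splices the short exact sequences `0 → Z_{j+1} → P_{i_j}^{⊕ k_j} → Z_j → 0` into
the resolution.
-/

open CategoryTheory CategoryTheory.Limits

attribute [local instance] CategoryTheory.Limits.HasFiniteBiproducts.of_hasFiniteProducts

universe w v u

variable (K : Type*) [Field K]
variable {𝒜 : Type u} [Category.{v} 𝒜] [Abelian 𝒜] [Linear K 𝒜]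
  [HasDerivedCategory.{w} 𝒜]

/-- An object of the abelian category `𝒜` viewed in its derived category
(placed in degree `0`). -/
noncomputable abbrev sQ (X : 𝒜) : DerivedCategory 𝒜 :=
  DerivedCategory.Q.obj ((HomologicalComplex.single 𝒜 (ComplexShape.up ℤ) 0).obj X)

/-- `{P_i}_{i ∈ ℤ}` is an ample sequence if for every `B` and all `i ≪ 0`:
(1) the natural morphism `Hom(P_i, B) ⊗ P_i → B` is surjective (expressed by
saying that the morphisms `P_i → B` are jointly epimorphic);
(2) `Hom_{D^b(𝒜)}(P_i, B[j]) = 0` for `j ≠ 0`;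
(3) `Hom(B, P_i) = 0`. -/
def IsAmpleSequence (P : ℤ → 𝒜) : Prop :=
  ∀ B : 𝒜, ∃ i₀ : ℤ, ∀ i : ℤ, i ≤ i₀ →
    (∀ ⦃C : 𝒜⦄ (g : B ⟶ C), (∀ f : P i ⟶ B, f ≫ g = 0) → g = 0) ∧
    (∀ j : ℤ, j ≠ 0 → ∀ φ : sQ (P i) ⟶ (sQ B)⟦j⟧, φ = 0) ∧
    (∀ f : B ⟶ P i, f = 0)

namespace CategoryTheory

section Resolution

variable {C : Type*} [Category C] [Abelian C]

namespace ShortComplex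

lemma exact_epi_comp_kernelι {X Y Z : C} (g : Y ⟶ Z) (e : X ⟶ kernel g) [Epi e] :
    (ShortComplex.mk (e ≫ kernel.ι g) g (by simp)).Exact := by
  let φ : ShortComplex.mk (e ≫ kernel.ι g) g (by simp) ⟶ ShortComplex.kernelSequence g :=
    { τ₁ := e, τ₂ := 𝟙 Y, τ₃ := 𝟙 Z, comm₁₂ := (Category.comp_id _).symm
      comm₂₃ := (Category.id_comp g).trans (Category.comp_id g).symm }
  have : Epi φ.τ₁ := ‹Epi e›
  have : IsIso φ.τ₂ := inferInstanceAs (IsIso (𝟙 Y))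
  have : Mono φ.τ₃ := inferInstanceAs (Mono (𝟙 Z))
  exact (exact_iff_of_epi_of_isIso_of_mono φ).2 (kernelSequence_exact g)

lemma exact_mk_comp_mono_iff {X Y Z W : C} (f : X ⟶ Y) (g : Y ⟶ Z) (m : Z ⟶ W)
    [Mono m] (w : f ≫ g = 0) :
    (ShortComplex.mk f (g ≫ m) (by rw [reassoc_of% w, zero_comp])).Exact ↔
      (ShortComplex.mk f g w).Exact :=
  (exact_iff_of_epi_of_isIso_of_mono
    { τ₁ := 𝟙 X, τ₂ := 𝟙 Y, τ₃ := m } : (ShortComplex.mk f g w).Exact ↔ _).symm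

end ShortComplex

lemma exists_resolution_of_forall_exists_epi {ι : Type*} (Q : ι → C)
    (hQ : ∀ B : C, ∃ (i : ι) (e : Q i ⟶ B), Epi e) (A : C) :
    ∃ (idx : ℕ → ι) (d : ∀ j : ℕ, Q (idx (j + 1)) ⟶ Q (idx j)) (ε : Q (idx 0) ⟶ A)
      (hd0 : d 0 ≫ ε = 0) (hdd : ∀ j : ℕ, d (j + 1) ≫ d j = 0),
      Epi ε ∧ (ShortComplex.mk (d 0) ε hd0).Exact ∧
        ∀ j : ℕ, (ShortComplex.mk (d (j + 1)) (d j) (hdd j)).Exact := by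
  choose i e he using hQ
  let syzygy : ℕ → C := fun n => Nat.rec (motive := fun _ => C) A (fun _ B => kernel (e B)) n
  have hd0 : (e (syzygy 1) ≫ kernel.ι (e (syzygy 0))) ≫ e (syzygy 0) = 0 := by simp
  have hdd : ∀ j : ℕ, (e (syzygy (j + 2)) ≫ kernel.ι (e (syzygy (j + 1)))) ≫
      e (syzygy (j + 1)) ≫ kernel.ι (e (syzygy j)) = 0 := by simp
  refine ⟨fun j => i (syzygy j), fun j => e (syzygy (j + 1)) ≫ kernel.ι (e (syzygy j)),
    e (syzygy 0), hd0, hdd, he _, ?_, fun j => ?_⟩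
  · exact ShortComplex.exact_epi_comp_kernelι _ _
  · exact (ShortComplex.exact_mk_comp_mono_iff _ _ _ _).2
      (ShortComplex.exact_epi_comp_kernelι _ _)

end Resolution

lemma epi_biproduct_desc_finBasis {C : Type*} [Category C]
    [Preadditive C] [Linear K C] [HasFiniteBiproducts C] {P B : C}
    [FiniteDimensional K (P ⟶ B)]
    (h : ∀ ⦃Z : C⦄ (g : B ⟶ Z), (∀ f : P ⟶ B, f ≫ g = 0) → g = 0) :
    Epi (biproduct.desc (Module.finBasis K (P ⟶ B))) := by
  set b := Module.finBasis K (P ⟶ B)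
  refine (Preadditive.epi_iff_cancel_zero _).2 fun Z g hg => h g fun f => ?_
  have hb : ∀ j, b j ≫ g = 0 := fun j => by
    simpa using biproduct.ι (fun _ => P) j ≫= hg
  rw [← b.sum_repr f, Preadditive.sum_comp]
  exact Finset.sum_eq_zero fun j _ => by rw [Linear.smul_comp, hb, smul_zero]

end CategoryTheory

/-- **Existence of resolutions by an ample sequence**: every object `A` of `𝒜`
admits a resolution `⋯ → P_{i_j}^{⊕ k_j} → ⋯ → P_{i_0}^{⊕ k_0} → A → 0`
by finite direct sums of members of the ample sequence. -/
theorem exists_resolution_by_ample_sequence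
    [∀ X Y : 𝒜, FiniteDimensional K (X ⟶ Y)]
    (P : ℤ → 𝒜) (hP : IsAmpleSequence P) (A : 𝒜) :
    ∃ (idx : ℕ → ℤ) (k : ℕ → ℕ)
      (d : ∀ j : ℕ, (⨁ fun _ : Fin (k (j + 1)) => P (idx (j + 1))) ⟶
        (⨁ fun _ : Fin (k j) => P (idx j)))
      (ε : (⨁ fun _ : Fin (k 0) => P (idx 0)) ⟶ A)
      (hd0 : d 0 ≫ ε = 0) (hdd : ∀ j : ℕ, d (j + 1) ≫ d j = 0),
      Epi ε ∧ (ShortComplex.mk (d 0) ε hd0).Exact ∧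
        ∀ j : ℕ, (ShortComplex.mk (d (j + 1)) (d j) (hdd j)).Exact := by
  have hepi (B : 𝒜) : ∃ (p : ℤ × ℕ) (e : (⨁ fun _ : Fin p.2 => P p.1) ⟶ B), Epi e := by
    obtain ⟨i₀, h⟩ := hP B
    exact ⟨(i₀, _), _, epi_biproduct_desc_finBasis K (h i₀ le_rfl).1⟩
  obtain ⟨idx, d, ε, hd0, hdd, hε, hexact₀, hexact⟩ :=
    exists_resolution_of_forall_exists_epi _ hepi A
  exact ⟨fun j => (idx j).1, fun j => (idx j).2, d, ε, hd0, hdd, hε, hexact₀, hexact⟩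
end
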